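/- arXiv:2311.16749 — 2 statements merged into one kernel-verified Lean document; each statement's English description precedes it below -/
import Mathlib

section
/- Let W⁺ and W⁻ be self-adjoint trace-free endomorphisms of 3-dimensional real inner product spaces, and let s be a real number. If s/6 + λ_min(W⁺) + λ_min(W⁻) ≥ 0, then (s/3 − 2·λ_max(W⁺)) + (s/3 − 2·λ_max(W⁻)) ≥ 0, and moreover s ≥ 0. (This is the algebraic core of the paper's Lemma 2: on an oriented Riemannian four-manifold the hypothesis 2K₁⊥ = s/6 + λ₁⁺ + λ₁⁻ ≥ 0 expresses nonnegative biorthogonal curvature, and the conclusion states κ⁺ + κ⁻ ≥ 0 and that the scalar curvature is nonnegative.) -/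
/-- The largest eigenvalue of an endomorphism of a finite-dimensional real
inner product space, as the supremum of its spectrum. -/
noncomputable def lambdaMax {V : Type*} [NormedAddCommGroup V] [InnerProductSpace ℝ V]
    (W : V →ₗ[ℝ] V) : ℝ :=
  sSup (spectrum ℝ W)

/-- The smallest eigenvalue, as the infimum of the spectrum. -/
noncomputable def lambdaMin {V : Type*} [NormedAddCommGroup V] [InnerProductSpace ℝ V]
    (W : V →ₗ[ℝ] V) : ℝ :=
  sInf (spectrum ℝ W)

lemma aux_spectrum_eq {V : Type*} [NormedAddCommGroup V] [InnerProductSpace ℝ V]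
    [FiniteDimensional ℝ V] {n : ℕ} (hdim : Module.finrank ℝ V = n) (hn : 0 < n)
    (W : V →ₗ[ℝ] V) (hW : W.IsSymmetric) :
    spectrum ℝ W = Set.range (hW.eigenvalues hdim) := by
  ext μ
  constructor
  · intro hμ
    have hev : Module.End.HasEigenvalue W μ :=
      Module.End.HasEigenvalue.of_mem_spectrum hμ
    obtain ⟨v, hv⟩ := hev.exists_hasEigenvector
    have hv' : W v = μ • v := hv.apply_eq_smul
    have hv0 : v ≠ 0 := hv.2
    have hrep : ∃ i, (hW.eigenvectorBasis hdim).repr v i ≠ 0 := by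
      by_contra hc
      push_neg at hc
      apply hv0
      have : (hW.eigenvectorBasis hdim).repr v = 0 := by
        ext i; exact hc i
      simpa using congrArg (hW.eigenvectorBasis hdim).repr.symm this
    obtain ⟨i, hi⟩ := hrep
    refine ⟨i, ?_⟩
    have h1 := hW.eigenvectorBasis_apply_self_apply hdim v i
    rw [hv'] at h1
    simp only [map_smul] at h1
    have : μ * (hW.eigenvectorBasis hdim).repr v i
        = hW.eigenvalues hdim i * (hW.eigenvectorBasis hdim).repr v i := by
      simpa [RCLike.smul_re, smul_eq_mul] using h1
    exact (mul_right_cancel₀ hi this).symm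
  · rintro ⟨i, rfl⟩
    exact (hW.hasEigenvalue_eigenvalues hdim i).mem_spectrum

lemma aux_trace_eq {V : Type*} [NormedAddCommGroup V] [InnerProductSpace ℝ V]
    [FiniteDimensional ℝ V] {n : ℕ} (hdim : Module.finrank ℝ V = n)
    (W : V →ₗ[ℝ] V) (hW : W.IsSymmetric) :
    LinearMap.trace ℝ V W = ∑ i, hW.eigenvalues hdim i := by
  rw [LinearMap.trace_eq_matrix_trace ℝ (hW.eigenvectorBasis hdim).toBasis, Matrix.trace]
  congr 1
  ext i
  simp [Matrix.diag, LinearMap.toMatrix_apply, hW.apply_eigenvectorBasis hdim i]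

lemma aux_key {V : Type*} [NormedAddCommGroup V] [InnerProductSpace ℝ V]
    (hdim : Module.finrank ℝ V = 3)
    (W : V →ₗ[ℝ] V) (hW : W.IsSymmetric) (htr : LinearMap.trace ℝ V W = 0) :
    lambdaMin W ≤ 0 ∧ lambdaMax W + 2 * lambdaMin W ≤ 0 := by
  haveI : FiniteDimensional ℝ V := Module.finite_of_finrank_pos (by rw [hdim]; norm_num)
  set μ := hW.eigenvalues hdim with hμ
  have hspec : spectrum ℝ W = Set.range μ := aux_spectrum_eq hdim (by norm_num) W hW
  have hsum : μ 0 + μ 1 + μ 2 = 0 := by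
    have := aux_trace_eq hdim W hW
    rw [htr] at this
    rw [Fin.sum_univ_three] at this
    linarith
  have hfin : (Set.range μ).Finite := Set.finite_range μ
  have hne : (Set.range μ).Nonempty := Set.range_nonempty μ
  have hmax_mem : lambdaMax W ∈ Set.range μ := by
    rw [lambdaMax, hspec]; exact hne.csSup_mem hfin
  have hmin_le : ∀ i, lambdaMin W ≤ μ i := fun i => by
    rw [lambdaMin, hspec]; exact csInf_le hfin.bddBelow ⟨i, rfl⟩
  have h0 := hmin_le 0
  have h1 := hmin_le 1
  have h2 := hmin_le 2
  constructor
  · linarith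
  · obtain ⟨i, hi⟩ := hmax_mem
    fin_cases i <;> simp at hi <;> linarith

/-- **Algebraic core of Lemma 2.**  For self-adjoint trace-free endomorphisms `W⁺`, `W⁻`
of 3-dimensional real inner product spaces and a real number `s`, if
`s/6 + λ_min(W⁺) + λ_min(W⁻) ≥ 0` then
`(s/3 − 2 λ_max(W⁺)) + (s/3 − 2 λ_max(W⁻)) ≥ 0` and `s ≥ 0`. -/
theorem stmt2 {Vp Vm : Type*}
    [NormedAddCommGroup Vp] [InnerProductSpace ℝ Vp]
    [NormedAddCommGroup Vm] [InnerProductSpace ℝ Vm]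
    (hdimp : Module.finrank ℝ Vp = 3) (hdimm : Module.finrank ℝ Vm = 3)
    (Wp : Vp →ₗ[ℝ] Vp) (hWp : Wp.IsSymmetric) (htrp : LinearMap.trace ℝ Vp Wp = 0)
    (Wm : Vm →ₗ[ℝ] Vm) (hWm : Wm.IsSymmetric) (htrm : LinearMap.trace ℝ Vm Wm = 0)
    (s : ℝ) (h : s / 6 + lambdaMin Wp + lambdaMin Wm ≥ 0) :
    (s / 3 - 2 * lambdaMax Wp) + (s / 3 - 2 * lambdaMax Wm) ≥ 0 ∧ s ≥ 0 := by
  obtain ⟨hp1, hp2⟩ := aux_key hdimp Wp hWp htrp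
  obtain ⟨hm1, hm2⟩ := aux_key hdimm Wm hWm htrm
  constructor <;> linarith
end

section
/- Let V be a real inner product space and let J, K be orthogonal complex structures on V with J ∘ K = K ∘ J. Let v ∈ V satisfy ⟨K(v), J(v)⟩ = 0, and set E₁ := v − K(J(v)) and E₃ := v + K(J(v)). Then: (1) J(E₁) = K(E₁); (2) J(E₃) = −K(E₃); (3) ⟨E₁, E₃⟩ = 0; (4) ⟨J(E₁), E₃⟩ = 0; and (5) ‖E₁‖² = ‖E₃‖² = 2‖v‖², so E₁ ≠ 0 and E₃ ≠ 0 whenever v ≠ 0. (This is the construction in the proof of the paper's Proposition 8 producing an orthogonal pair E₁, E₃ with JE₁ = KE₁ and JE₃ = −KE₃ from a vector v with ⟨K(v), J(v)⟩ = 0 and K(J(v)) = J(K(v)).) -/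
/-!
Write `w := K (J v)`. Since `J` and `K` commute and square to `-1`, `J w = K v` and `K w = -J v`,
so `J (v ∓ w) = ±K (v ∓ w)` is pure algebra. Since `J` and `K` are isometries, `‖w‖ = ‖v‖`, which
makes `v - w` and `v + w` orthogonal; skew-adjointness of `K` turns the hypothesis
`⟪K v, J v⟫ = 0` into `⟪v, w⟫ = 0`, whence `‖v ∓ w‖² = 2‖v‖²`. Finally `J (v - w) = J v + K v`,
and each of the four terms of `⟪J v + K v, v + w⟫` vanishes by skew-adjointness and isometry.
-/

open scoped RealInnerProductSpace

section CommutingSquareRootsOfNegOne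

variable {R M : Type*} [CommRing R] [AddCommGroup M] [Module R M] {J K : M →ₗ[R] M}

theorem map_sub_comp_apply_eq (hJ2 : J ∘ₗ J = -LinearMap.id) (hcomm : J ∘ₗ K = K ∘ₗ J)
    (v : M) : J (v - K (J v)) = J v + K v := by
  have hJJ : J (J v) = -v := by simpa using LinearMap.congr_fun hJ2 v
  have hJK : J (K (J v)) = K (J (J v)) := LinearMap.congr_fun hcomm (J v)
  rw [map_sub, hJK, hJJ, map_neg, sub_neg_eq_add]

theorem map_add_comp_apply_eq (hJ2 : J ∘ₗ J = -LinearMap.id) (hcomm : J ∘ₗ K = K ∘ₗ J)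
    (v : M) : J (v + K (J v)) = J v - K v := by
  have hJJ : J (J v) = -v := by simpa using LinearMap.congr_fun hJ2 v
  have hJK : J (K (J v)) = K (J (J v)) := LinearMap.congr_fun hcomm (J v)
  rw [map_add, hJK, hJJ, map_neg, ← sub_eq_add_neg]

theorem map_sub_apply_apply_eq (hK2 : K ∘ₗ K = -LinearMap.id) (v w : M) :
    K (v - K w) = K v + w := by
  have hKK : K (K w) = -w := by simpa using LinearMap.congr_fun hK2 w
  rw [map_sub, hKK, sub_neg_eq_add]

theorem map_add_apply_apply_eq (hK2 : K ∘ₗ K = -LinearMap.id) (v w : M) :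
    K (v + K w) = K v - w := by
  have hKK : K (K w) = -w := by simpa using LinearMap.congr_fun hK2 w
  rw [map_add, hKK, ← sub_eq_add_neg]

end CommutingSquareRootsOfNegOne

section OrthComplexStructure

variable {V : Type*} [NormedAddCommGroup V] [InnerProductSpace ℝ V]

structure IsOrthComplexStructure (J : V →ₗ[ℝ] V) : Prop where
  inner_map_map : ∀ x y : V, ⟪J x, J y⟫ = ⟪x, y⟫
  comp_self : J ∘ₗ J = -LinearMap.id

namespace IsOrthComplexStructure

variable {J K : V →ₗ[ℝ] V}

theorem apply_apply (hJ : IsOrthComplexStructure J) (x : V) : J (J x) = -x := by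
  simpa using LinearMap.congr_fun hJ.comp_self x

theorem norm_map (hJ : IsOrthComplexStructure J) (x : V) : ‖J x‖ = ‖x‖ := by
  rw [norm_eq_sqrt_real_inner, hJ.inner_map_map, ← norm_eq_sqrt_real_inner]

theorem inner_map_left (hJ : IsOrthComplexStructure J) (x y : V) : ⟪J x, y⟫ = -⟪x, J y⟫ := by
  rw [← hJ.inner_map_map, hJ.apply_apply, inner_neg_left]

theorem inner_map_self (hJ : IsOrthComplexStructure J) (x : V) : ⟪J x, x⟫ = 0 := by
  linarith [hJ.inner_map_left x x, real_inner_comm x (J x)]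

theorem inner_self_map (hJ : IsOrthComplexStructure J) (x : V) : ⟪x, J x⟫ = 0 := by
  rw [real_inner_comm, hJ.inner_map_self]

theorem inner_add_add_comp_apply_eq_zero (hJ : IsOrthComplexStructure J)
    (hK : IsOrthComplexStructure K) (v : V) : ⟪J v + K v, v + K (J v)⟫ = 0 := by
  have hKvKJv : ⟪K v, K (J v)⟫ = 0 := by rw [hK.inner_map_map, hJ.inner_self_map]
  rw [inner_add_left, inner_add_right, inner_add_right, hJ.inner_map_self, hK.inner_self_map,
    hK.inner_map_self, hKvKJv]
  norm_num

end IsOrthComplexStructure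

end OrthComplexStructure

open IsOrthComplexStructure in
/-- **Construction in the proof of Proposition 8.**  Let `J`, `K` be commuting orthogonal
complex structures on a real inner product space `V`, and let `v ∈ V` satisfy
`⟪K(v), J(v)⟫ = 0`.  Setting `E₁ := v − K(J(v))` and `E₃ := v + K(J(v))`, one has
`J(E₁) = K(E₁)`, `J(E₃) = −K(E₃)`, `⟪E₁, E₃⟫ = 0`, `⟪J(E₁), E₃⟫ = 0`, and
`‖E₁‖² = ‖E₃‖² = 2‖v‖²`, so that `E₁ ≠ 0` and `E₃ ≠ 0` whenever `v ≠ 0`. -/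
theorem stmt6 {V : Type*} [NormedAddCommGroup V] [InnerProductSpace ℝ V]
    (J K : V →ₗ[ℝ] V)
    (hJorth : ∀ x y : V, ⟪J x, J y⟫ = ⟪x, y⟫) (hJ2 : J ∘ₗ J = -LinearMap.id)
    (hKorth : ∀ x y : V, ⟪K x, K y⟫ = ⟪x, y⟫) (hK2 : K ∘ₗ K = -LinearMap.id)
    (hcomm : J ∘ₗ K = K ∘ₗ J)
    (v : V) (hv : ⟪K v, J v⟫ = 0)
    (E₁ E₃ : V) (hE₁ : E₁ = v - K (J v)) (hE₃ : E₃ = v + K (J v)) :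
    J E₁ = K E₁ ∧
    J E₃ = -K E₃ ∧
    ⟪E₁, E₃⟫ = 0 ∧
    ⟪J E₁, E₃⟫ = 0 ∧
    (‖E₁‖ ^ 2 = 2 * ‖v‖ ^ 2 ∧ ‖E₃‖ ^ 2 = 2 * ‖v‖ ^ 2) ∧
    (v ≠ 0 → E₁ ≠ 0 ∧ E₃ ≠ 0) := by
  have hJ : IsOrthComplexStructure J := ⟨hJorth, hJ2⟩
  have hK : IsOrthComplexStructure K := ⟨hKorth, hK2⟩
  have hw : ‖K (J v)‖ = ‖v‖ := by rw [hK.norm_map, hJ.norm_map]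
  have hvw : ⟪v, K (J v)⟫ = 0 := by rw [← neg_eq_zero, ← hK.inner_map_left, hv]
  have hn₁ : ‖E₁‖ ^ 2 = 2 * ‖v‖ ^ 2 := by rw [hE₁, norm_sub_sq_real, hvw, hw]; ring
  have hn₃ : ‖E₃‖ ^ 2 = 2 * ‖v‖ ^ 2 := by rw [hE₃, norm_add_sq_real, hvw, hw]; ring
  have hne : ∀ E : V, ‖E‖ ^ 2 = 2 * ‖v‖ ^ 2 → v ≠ 0 → E ≠ 0 := by
    rintro E hE hv0 rfl
    exact hv0 (by simpa using hE)
  subst hE₁ hE₃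
  refine ⟨?_, ?_, ?_, ?_, ⟨hn₁, hn₃⟩, fun hv0 => ⟨hne _ hn₁ hv0, hne _ hn₃ hv0⟩⟩
  · rw [map_sub_comp_apply_eq hJ2 hcomm, map_sub_apply_apply_eq hK2, add_comm]
  · rw [map_add_comp_apply_eq hJ2 hcomm, map_add_apply_apply_eq hK2, neg_sub]
  · rw [real_inner_comm, real_inner_add_sub_eq_zero_iff, hw]
  · rw [map_sub_comp_apply_eq hJ2 hcomm]
    exact inner_add_add_comp_apply_eq_zero hJ hK v
end
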